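/- Suppose in addition that A and D are invertible in Mat_N(𝒜). Then the matrices F := D A^{−1} D^{−1} and G := A satisfy the braided-commutation relation G₁ R F₂ = R F₂ R^{−1} G₁ R, and consequently the matrix M := F G = D A^{−1} D^{−1} A satisfies the reflection equation R₂₁ M₁ R M₂ = M₂ R₂₁ M₁ R; in particular the assignment l^i_j ↦ (D A^{−1} D^{−1} A)^i_j defines a homomorphism from the reflection equation algebra on N² generators to 𝒜 (the quantum moment map μ^e_v for a loop edge). -/
import Mathlib


open Matrix Kronecker

noncomputable section

/-- Coefficient matrix of the R-matrix `R[N]` on `k^N ⊗ k^N`: the entry in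
row `(i,j)`, column `(s,t)` is `q^{δ_{ij}} δ_{is} δ_{jt} + (q-q⁻¹) θ(i-j) δ_{it} δ_{js}`,
where `θ(x) = 1` if `x > 0` and `0` otherwise. -/
def Rmat (k : Type) [Field k] (q : k) (N : ℕ) :
    Matrix (Fin N × Fin N) (Fin N × Fin N) k :=
  Matrix.of fun p r =>
    (if p.1 = p.2 then q else 1) * (if p = r then 1 else 0)
      + (q - q⁻¹) * ((if p.2 < p.1 then (1 : k) else 0) *
          (if p.1 = r.2 ∧ p.2 = r.1 then 1 else 0))

/-- The explicit inverse of `R[N]`: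
`(R⁻¹)^{ij}_{st} = q^{-δ_{ij}} δ_{is} δ_{jt} - (q-q⁻¹) θ(i-j) δ_{it} δ_{js}`. -/
def RmatInv (k : Type) [Field k] (q : k) (N : ℕ) :
    Matrix (Fin N × Fin N) (Fin N × Fin N) k :=
  Matrix.of fun p r =>
    (if p.1 = p.2 then q⁻¹ else 1) * (if p = r then 1 else 0)
      - (q - q⁻¹) * ((if p.2 < p.1 then (1 : k) else 0) *
          (if p.1 = r.2 ∧ p.2 = r.1 then 1 else 0))

variable (k : Type) [Field k] (𝒜 : Type) [Ring 𝒜] [Algebra k 𝒜]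

/-- `R[N]` regarded as a matrix over the `k`-algebra `𝒜`. -/
def RA (q : k) (N : ℕ) : Matrix (Fin N × Fin N) (Fin N × Fin N) 𝒜 :=
  (Rmat k q N).map (algebraMap k 𝒜)

/-- `R[N]₂₁ := τ ∘ R[N] ∘ τ` regarded as a matrix over `𝒜`. -/
def RA21 (q : k) (N : ℕ) : Matrix (Fin N × Fin N) (Fin N × Fin N) 𝒜 :=
  Matrix.of fun p r => RA k 𝒜 q N (p.2, p.1) (r.2, r.1)

/-- `(R[N])⁻¹` regarded as a matrix over `𝒜`. -/
def RAinv (q : k) (N : ℕ) : Matrix (Fin N × Fin N) (Fin N × Fin N) 𝒜 :=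
  (RmatInv k q N).map (algebraMap k 𝒜)

/-- `(R[N]₂₁)⁻¹ = (R[N]⁻¹)₂₁` regarded as a matrix over `𝒜`. -/
def RAinv21 (q : k) (N : ℕ) : Matrix (Fin N × Fin N) (Fin N × Fin N) 𝒜 :=
  Matrix.of fun p r => RAinv k 𝒜 q N (p.2, p.1) (r.2, r.1)

/-- The flip `τ : k^m ⊗ k^n → k^n ⊗ k^m` as a matrix over `𝒜`. -/
def flipA (m n : ℕ) : Matrix (Fin n × Fin m) (Fin m × Fin n) 𝒜 :=
  Matrix.of fun p r => if p.1 = r.2 ∧ p.2 = r.1 then 1 else 0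

/-- The defining relations (M1), (M2), (M3) of the quantized edge algebra `𝒟_q(e)`
of the Kronecker quiver with tail dimension `n` and head dimension `m`, for an
`n × m` matrix `A` and an `m × n` matrix `D` over `𝒜`:
(M1) `R[n] A₂ A₁ = A₁ A₂ R[m]₂₁`, (M2) `R[m] D₂ D₁ = D₁ D₂ R[n]₂₁`,
(M3) `D₂ (R[n])⁻¹ A₁ = A₁ R[m] D₂ + τ`. -/
def EdgeRel (q : k) {n m : ℕ}
    (A : Matrix (Fin n) (Fin m) 𝒜) (D : Matrix (Fin m) (Fin n) 𝒜) : Prop :=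
  RA k 𝒜 q n * ((1 : Matrix (Fin n) (Fin n) 𝒜) ⊗ₖ A) * (A ⊗ₖ (1 : Matrix (Fin m) (Fin m) 𝒜))
      = (A ⊗ₖ (1 : Matrix (Fin n) (Fin n) 𝒜)) * ((1 : Matrix (Fin m) (Fin m) 𝒜) ⊗ₖ A)
          * RA21 k 𝒜 q m
    ∧ RA k 𝒜 q m * ((1 : Matrix (Fin m) (Fin m) 𝒜) ⊗ₖ D) * (D ⊗ₖ (1 : Matrix (Fin n) (Fin n) 𝒜))
      = (D ⊗ₖ (1 : Matrix (Fin m) (Fin m) 𝒜)) * ((1 : Matrix (Fin n) (Fin n) 𝒜) ⊗ₖ D)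
          * RA21 k 𝒜 q n
    ∧ ((1 : Matrix (Fin n) (Fin n) 𝒜) ⊗ₖ D) * RAinv k 𝒜 q n * (A ⊗ₖ (1 : Matrix (Fin n) (Fin n) 𝒜))
      = (A ⊗ₖ (1 : Matrix (Fin m) (Fin m) 𝒜)) * RA k 𝒜 q m * ((1 : Matrix (Fin m) (Fin m) 𝒜) ⊗ₖ D)
          + flipA 𝒜 m n

/-- The defining relations (L1), (L2), (L3) of the quantized loop edge algebra `𝒟_q(e)`
at a vertex of dimension `N`, with `R := R[N]`:
(L1) `R₂₁ A₁ R A₂ = A₂ R₂₁ A₁ R`, (L2) `R₂₁ D₁ R D₂ = D₂ R₂₁ D₁ R`,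
(L3) `R₂₁ D₁ R A₂ = A₂ R₂₁ D₁ R₂₁⁻¹`. -/
def LoopRel (q : k) {N : ℕ} (A D : Matrix (Fin N) (Fin N) 𝒜) : Prop :=
  RA21 k 𝒜 q N * (A ⊗ₖ (1 : Matrix (Fin N) (Fin N) 𝒜)) * RA k 𝒜 q N
        * ((1 : Matrix (Fin N) (Fin N) 𝒜) ⊗ₖ A)
      = ((1 : Matrix (Fin N) (Fin N) 𝒜) ⊗ₖ A) * RA21 k 𝒜 q N
        * (A ⊗ₖ (1 : Matrix (Fin N) (Fin N) 𝒜)) * RA k 𝒜 q N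
    ∧ RA21 k 𝒜 q N * (D ⊗ₖ (1 : Matrix (Fin N) (Fin N) 𝒜)) * RA k 𝒜 q N
        * ((1 : Matrix (Fin N) (Fin N) 𝒜) ⊗ₖ D)
      = ((1 : Matrix (Fin N) (Fin N) 𝒜) ⊗ₖ D) * RA21 k 𝒜 q N
        * (D ⊗ₖ (1 : Matrix (Fin N) (Fin N) 𝒜)) * RA k 𝒜 q N
    ∧ RA21 k 𝒜 q N * (D ⊗ₖ (1 : Matrix (Fin N) (Fin N) 𝒜)) * RA k 𝒜 q N
        * ((1 : Matrix (Fin N) (Fin N) 𝒜) ⊗ₖ A)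
      = ((1 : Matrix (Fin N) (Fin N) 𝒜) ⊗ₖ A) * RA21 k 𝒜 q N
        * (D ⊗ₖ (1 : Matrix (Fin N) (Fin N) 𝒜)) * RAinv21 k 𝒜 q N

/-- The matrix `L = (l^i_j)` of generators of the free algebra on `N²` symbols. -/
def REgen (k : Type) [Field k] (N : ℕ) :
    Matrix (Fin N) (Fin N) (FreeAlgebra k (Fin N × Fin N)) :=
  Matrix.of fun i j => FreeAlgebra.ι k (i, j)

/-- The reflection equation relations `L₂ R₂₁ L₁ R = R₂₁ L₁ R L₂` on the free algebra:
`x` is related to `y` when they are corresponding entries of the two sides. -/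
def RERel (k : Type) [Field k] (q : k) (N : ℕ) :
    FreeAlgebra k (Fin N × Fin N) → FreeAlgebra k (Fin N × Fin N) → Prop :=
  fun x y => ∃ p r,
    x = (((1 : Matrix (Fin N) (Fin N) (FreeAlgebra k (Fin N × Fin N))) ⊗ₖ REgen k N)
          * RA21 k (FreeAlgebra k (Fin N × Fin N)) q N
          * (REgen k N ⊗ₖ (1 : Matrix (Fin N) (Fin N) (FreeAlgebra k (Fin N × Fin N))))
          * RA k (FreeAlgebra k (Fin N × Fin N)) q N) p r
    ∧ y = (RA21 k (FreeAlgebra k (Fin N × Fin N)) q N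
          * (REgen k N ⊗ₖ (1 : Matrix (Fin N) (Fin N) (FreeAlgebra k (Fin N × Fin N))))
          * RA k (FreeAlgebra k (Fin N × Fin N)) q N
          * ((1 : Matrix (Fin N) (Fin N) (FreeAlgebra k (Fin N × Fin N))) ⊗ₖ REgen k N)) p r

/-- The reflection equation algebra on `N²` generators `l^i_j`. -/
def REAlgebra (k : Type) [Field k] (q : k) (N : ℕ) : Type :=
  RingQuot (RERel k q N)

noncomputable instance (k : Type) [Field k] (q : k) (N : ℕ) : Ring (REAlgebra k q N) :=
  inferInstanceAs (Ring (RingQuot (RERel k q N)))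

noncomputable instance (k : Type) [Field k] (q : k) (N : ℕ) : Algebra k (REAlgebra k q N) :=
  inferInstanceAs (Algebra k (RingQuot (RERel k q N)))


/-! ### Auxiliary machinery -/

section AuxInverse

variable {k' : Type} [Field k']

private def Ediag (q : k') (N : ℕ) : Matrix (Fin N × Fin N) (Fin N × Fin N) k' :=
  Matrix.diagonal (fun p => if p.1 = p.2 then q else 1)

private def Tmat (k' : Type) [Field k'] (N : ℕ) :
    Matrix (Fin N × Fin N) (Fin N × Fin N) k' :=
  Matrix.of fun p r => if p.2 < p.1 ∧ r = (p.2, p.1) then (1 : k') else 0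

private theorem swap_cond {N : ℕ} (p r : Fin N × Fin N) :
    (p.1 = r.2 ∧ p.2 = r.1) ↔ r = (p.2, p.1) := by
  constructor
  · rintro ⟨h1, h2⟩; exact Prod.ext h2.symm h1.symm
  · rintro rfl; exact ⟨rfl, rfl⟩

private theorem Rmat_eq (q : k') (N : ℕ) :
    Rmat k' q N = Ediag q N + (q - q⁻¹) • Tmat k' N := by
  ext p r
  simp only [Rmat, Ediag, Tmat, Matrix.add_apply, Matrix.smul_apply, Matrix.of_apply,
    Matrix.diagonal_apply, smul_eq_mul]
  congr 1
  · split <;> simp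
  · congr 1
    by_cases h1 : p.2 < p.1 <;> by_cases h2 : r = (p.2, p.1) <;>
      simp [h1, h2, swap_cond]

private theorem RmatInv_eq (q : k') (N : ℕ) :
    RmatInv k' q N = Ediag q⁻¹ N - (q - q⁻¹) • Tmat k' N := by
  ext p r
  simp only [RmatInv, Ediag, Tmat, Matrix.sub_apply, Matrix.smul_apply, Matrix.of_apply,
    Matrix.diagonal_apply, smul_eq_mul]
  congr 1
  · split <;> simp
  · congr 1
    by_cases h1 : p.2 < p.1 <;> by_cases h2 : r = (p.2, p.1) <;>
      simp [h1, h2, swap_cond]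

private theorem Tmat_mul_Tmat (N : ℕ) : Tmat k' N * Tmat k' N = 0 := by
  ext p s
  simp only [Matrix.mul_apply, Tmat, Matrix.of_apply, Matrix.zero_apply]
  rw [Finset.sum_eq_zero]
  intro t _
  rcases Classical.em (p.2 < p.1 ∧ t = (p.2, p.1)) with ⟨h1, rfl⟩ | h
  · simp [not_lt_of_gt h1]
  · simp [h]

private theorem Ediag_mul_Tmat (q : k') (N : ℕ) : Ediag q N * Tmat k' N = Tmat k' N := by
  ext p s
  simp only [Ediag, Matrix.diagonal_mul, Tmat, Matrix.of_apply]
  by_cases h : p.2 < p.1 ∧ s = (p.2, p.1)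
  · simp [h, ne_of_gt h.1]
  · simp [h]

private theorem Tmat_mul_Ediag (q : k') (N : ℕ) : Tmat k' N * Ediag q N = Tmat k' N := by
  ext p s
  simp only [Ediag, Matrix.mul_diagonal, Tmat, Matrix.of_apply]
  by_cases h : p.2 < p.1 ∧ s = (p.2, p.1)
  · rcases h with ⟨h1, rfl⟩
    simp [h1, ne_of_lt h1]
  · simp [h]

private theorem Ediag_mul_Ediag (q q' : k') (hq : q * q' = 1) (N : ℕ) :
    Ediag q N * Ediag q' N = 1 := by
  ext p r
  rw [Ediag, Ediag, Matrix.diagonal_mul_diagonal]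
  simp only [Matrix.diagonal_apply, Matrix.one_apply]
  by_cases h : p.1 = p.2 <;> simp [h, hq]

private theorem Rmat_mul_RmatInv (q : k') (hq : q ≠ 0) (N : ℕ) :
    Rmat k' q N * RmatInv k' q N = 1 := by
  rw [Rmat_eq, RmatInv_eq, add_mul, mul_sub, mul_sub, smul_mul_assoc, smul_mul_assoc,
    mul_smul_comm, mul_smul_comm, Tmat_mul_Tmat, Ediag_mul_Tmat, Tmat_mul_Ediag,
    Ediag_mul_Ediag q q⁻¹ (mul_inv_cancel₀ hq)]
  simp

private theorem RmatInv_mul_Rmat (q : k') (hq : q ≠ 0) (N : ℕ) :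
    RmatInv k' q N * Rmat k' q N = 1 := by
  rw [Rmat_eq, RmatInv_eq, sub_mul, mul_add, mul_add, smul_mul_assoc, smul_mul_assoc,
    mul_smul_comm, mul_smul_comm, Tmat_mul_Tmat, Ediag_mul_Tmat, Tmat_mul_Ediag,
    Ediag_mul_Ediag q⁻¹ q (inv_mul_cancel₀ hq)]
  simp

end AuxInverse

section AuxKron

variable {R : Type} [Ring R] {N : ℕ}

private theorem oneKron_mul (X Y : Matrix (Fin N) (Fin N) R) :
    ((1 : Matrix (Fin N) (Fin N) R) ⊗ₖ X) * ((1 : Matrix (Fin N) (Fin N) R) ⊗ₖ Y)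
      = (1 : Matrix (Fin N) (Fin N) R) ⊗ₖ (X * Y) := by
  ext ⟨a, b⟩ ⟨c, d⟩
  simp [Matrix.mul_apply, Fintype.sum_prod_type, Matrix.one_apply, ite_mul, mul_ite,
    Finset.sum_ite_eq, Finset.sum_ite_eq']

private theorem kronOne_mul (X Y : Matrix (Fin N) (Fin N) R) :
    (X ⊗ₖ (1 : Matrix (Fin N) (Fin N) R)) * (Y ⊗ₖ (1 : Matrix (Fin N) (Fin N) R))
      = (X * Y) ⊗ₖ (1 : Matrix (Fin N) (Fin N) R) := by
  ext ⟨a, b⟩ ⟨c, d⟩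
  simp [Matrix.mul_apply, Fintype.sum_prod_type, Matrix.one_apply, ite_mul, mul_ite,
    Finset.sum_ite_eq, Finset.sum_ite_eq']

private theorem map_kron {S : Type} [Ring S] (g : R →+* S)
    (X Y : Matrix (Fin N) (Fin N) R) :
    (X ⊗ₖ Y).map g = (X.map g) ⊗ₖ (Y.map g) := by
  ext ⟨a, b⟩ ⟨c, d⟩
  simp [Matrix.map_apply, Matrix.kroneckerMap_apply, _root_.map_mul]

end AuxKron

section AuxSw

variable {k 𝒜}

private abbrev swEq {N : ℕ} : Matrix (Fin N × Fin N) (Fin N × Fin N) 𝒜 ≃ₐ[k]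
    Matrix (Fin N × Fin N) (Fin N × Fin N) 𝒜 :=
  Matrix.reindexAlgEquiv k 𝒜 (Equiv.prodComm (Fin N) (Fin N))

private theorem swEq_RA (q : k) (N : ℕ) : swEq (k := k) (RA k 𝒜 q N) = RA21 k 𝒜 q N := rfl
private theorem swEq_RA21 (q : k) (N : ℕ) : swEq (k := k) (RA21 k 𝒜 q N) = RA k 𝒜 q N := rfl
private theorem swEq_RAinv (q : k) (N : ℕ) :
    swEq (k := k) (RAinv k 𝒜 q N) = RAinv21 k 𝒜 q N := rfl
private theorem swEq_RAinv21 (q : k) (N : ℕ) :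
    swEq (k := k) (RAinv21 k 𝒜 q N) = RAinv k 𝒜 q N := rfl

private theorem swEq_kron_one {N : ℕ} (X : Matrix (Fin N) (Fin N) 𝒜) :
    swEq (k := k) (X ⊗ₖ (1 : Matrix (Fin N) (Fin N) 𝒜))
      = (1 : Matrix (Fin N) (Fin N) 𝒜) ⊗ₖ X := by
  ext ⟨a, b⟩ ⟨c, d⟩
  simp only [Matrix.reindexAlgEquiv_apply, Matrix.reindex_apply, Matrix.submatrix_apply,
    Equiv.prodComm_symm, Equiv.prodComm_apply, Prod.swap_prod_mk,
    Matrix.kroneckerMap_apply, Matrix.one_apply]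
  by_cases h : a = c <;> simp [h]

private theorem swEq_one_kron {N : ℕ} (X : Matrix (Fin N) (Fin N) 𝒜) :
    swEq (k := k) ((1 : Matrix (Fin N) (Fin N) 𝒜) ⊗ₖ X)
      = X ⊗ₖ (1 : Matrix (Fin N) (Fin N) 𝒜) := by
  ext ⟨a, b⟩ ⟨c, d⟩
  simp only [Matrix.reindexAlgEquiv_apply, Matrix.reindex_apply, Matrix.submatrix_apply,
    Equiv.prodComm_symm, Equiv.prodComm_apply, Prod.swap_prod_mk,
    Matrix.kroneckerMap_apply, Matrix.one_apply]
  by_cases h : b = d <;> simp [h]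

end AuxSw

section Core

variable {M : Type*} [Monoid M]

private theorem conj_rule {a b : M} {f g : M → M}
    (hab : ∀ x, a * (b * x) = x) (hba : ∀ x, b * (a * x) = x)
    (H : ∀ x, f (a * x) = a * g x) : ∀ x, g (b * x) = b * f x := by
  intro x
  rw [← hba (g (b * x)), ← H, hab]

private theorem comm_inv {b : M} {f g : M → M}
    (hfg : ∀ x, f (g x) = x) (hgf : ∀ x, g (f x) = x)
    (hc : ∀ x, f (b * x) = b * f x) : ∀ x, g (b * x) = b * g x := by
  intro x
  conv_lhs => rw [← hfg x]
  rw [← hc (g x), hgf]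

private theorem coreA (r ri r' ri' a1 b1 a2 b2 d1 c1 d2 c2 : M)
    (hr : ∀ x, r * (ri * x) = x) (hir : ∀ x, ri * (r * x) = x)
    (hr' : ∀ x, r' * (ri' * x) = x) (hir' : ∀ x, ri' * (r' * x) = x)
    (ha1 : ∀ x, a1 * (b1 * x) = x) (hb1 : ∀ x, b1 * (a1 * x) = x)
    (ha2 : ∀ x, a2 * (b2 * x) = x) (hb2 : ∀ x, b2 * (a2 * x) = x)
    (hd1 : ∀ x, d1 * (c1 * x) = x) (hc1 : ∀ x, c1 * (d1 * x) = x)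
    (hd2 : ∀ x, d2 * (c2 * x) = x) (hc2 : ∀ x, c2 * (d2 * x) = x)
    (hL1 : ∀ x, r' * (a1 * (r * (a2 * x))) = a2 * (r' * (a1 * (r * x))))
    (hL2 : ∀ x, r' * (d1 * (r * (d2 * x))) = d2 * (r' * (d1 * (r * x))))
    (hL3 : ∀ x, r' * (d1 * (r * (a2 * x))) = a2 * (r' * (d1 * (ri' * x))))
    (hL1' : ∀ x, r * (a2 * (r' * (a1 * x))) = a1 * (r * (a2 * (r' * x))))
    (hL2' : ∀ x, r * (d2 * (r' * (d1 * x))) = d1 * (r * (d2 * (r' * x))))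
    (hL3' : ∀ x, r * (d2 * (r' * (a1 * x))) = a1 * (r * (d2 * (ri * x)))) :
    ∀ x, a1 * (r * (d2 * (b2 * (c2 * x)))) = r * (d2 * (b2 * (c2 * (ri * (a1 * (r * x)))))) := by
  have s1 : ∀ x, a1 * (r * (d2 * x)) = r * (d2 * (r' * (a1 * (r * x)))) := by
    intro x; rw [hL3', hir]
  have s2 : ∀ x, r' * (a1 * (r * (b2 * x))) = b2 * (r' * (a1 * (r * x))) :=
    conj_rule (f := fun y => r' * (a1 * (r * y))) (g := fun y => r' * (a1 * (r * y))) ha2 hb2 hL1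
  have s3 : ∀ x, c2 * (ri * (a1 * (r * (d2 * x)))) = r' * (a1 * (r * x)) := by
    intro x; rw [s1, hir, hc2]
  intro x
  rw [s1, s2, ← s3 (c2 * x), hd2]

private theorem coreB (r ri r' ri' a1 b1 a2 b2 d1 c1 d2 c2 : M)
    (hr : ∀ x, r * (ri * x) = x) (hir : ∀ x, ri * (r * x) = x)
    (hr' : ∀ x, r' * (ri' * x) = x) (hir' : ∀ x, ri' * (r' * x) = x)
    (ha1 : ∀ x, a1 * (b1 * x) = x) (hb1 : ∀ x, b1 * (a1 * x) = x)
    (ha2 : ∀ x, a2 * (b2 * x) = x) (hb2 : ∀ x, b2 * (a2 * x) = x)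
    (hd1 : ∀ x, d1 * (c1 * x) = x) (hc1 : ∀ x, c1 * (d1 * x) = x)
    (hd2 : ∀ x, d2 * (c2 * x) = x) (hc2 : ∀ x, c2 * (d2 * x) = x)
    (hL1 : ∀ x, r' * (a1 * (r * (a2 * x))) = a2 * (r' * (a1 * (r * x))))
    (hL2 : ∀ x, r' * (d1 * (r * (d2 * x))) = d2 * (r' * (d1 * (r * x))))
    (hL3 : ∀ x, r' * (d1 * (r * (a2 * x))) = a2 * (r' * (d1 * (ri' * x))))
    (hL1' : ∀ x, r * (a2 * (r' * (a1 * x))) = a1 * (r * (a2 * (r' * x))))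
    (hL2' : ∀ x, r * (d2 * (r' * (d1 * x))) = d1 * (r * (d2 * (r' * x))))
    (hL3' : ∀ x, r * (d2 * (r' * (a1 * x))) = a1 * (r * (d2 * (ri * x)))) :
    ∀ x, r' * (d1 * (b1 * (c1 * (r * (d2 * (b2 * (c2 * x)))))))
      = d2 * (b2 * (c2 * (r' * (d1 * (b1 * (c1 * (r * x))))))) := by
  have pre1 : ∀ x, r * (d2 * (r' * (c1 * x))) = c1 * (r * (d2 * (r' * x))) :=
    conj_rule (f := fun y => r * (d2 * (r' * y))) (g := fun y => r * (d2 * (r' * y))) hd1 hc1 hL2'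
  have u1 : ∀ x, c1 * (r * (d2 * x)) = r * (d2 * (r' * (c1 * (ri' * x)))) := by
    intro x; rw [pre1, hr']
  have pre2 : ∀ x, r * (d2 * (ri * (b1 * x))) = b1 * (r * (d2 * (r' * x))) :=
    conj_rule (f := fun y => r * (d2 * (r' * y))) (g := fun y => r * (d2 * (ri * y))) ha1 hb1 hL3'
  have u2 : ∀ x, b1 * (r * (d2 * x)) = r * (d2 * (ri * (b1 * (ri' * x)))) := by
    intro x; rw [pre2, hr']
  have u6 : ∀ x, r' * (d1 * (ri' * (b2 * x))) = b2 * (r' * (d1 * (r * x))) :=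
    conj_rule (f := fun y => r' * (d1 * (r * y))) (g := fun y => r' * (d1 * (ri' * y))) ha2 hb2 hL3
  have hfp : ∀ y, r' * (d1 * (r * (ri * (c1 * (ri' * y))))) = y := by
    intro y; rw [hr, hd1, hr']
  have qb : ∀ x, r' * (c1 * (ri' * (b2 * x))) = b2 * (ri * (c1 * (ri' * x))) := by
    intro x
    calc r' * (c1 * (ri' * (b2 * x)))
        = r' * (c1 * (ri' * (b2 * (r' * (d1 * (r * (ri * (c1 * (ri' * x))))))))) := by
          rw [hfp]
      _ = r' * (c1 * (ri' * (r' * (d1 * (ri' * (b2 * (ri * (c1 * (ri' * x))))))))) := by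
          rw [← u6]
      _ = b2 * (ri * (c1 * (ri' * x))) := by rw [hir', hc1, hr']
  have u4 : ∀ x, c1 * (ri' * (b2 * x)) = ri' * (b2 * (ri * (c1 * (ri' * x)))) := by
    intro x; rw [← qb, hir']
  have pre5 : ∀ x, r * (a2 * (r' * (b1 * x))) = b1 * (r * (a2 * (r' * x))) :=
    conj_rule (f := fun y => r * (a2 * (r' * y))) (g := fun y => r * (a2 * (r' * y))) ha1 hb1 hL1'
  have comm5 : ∀ x, ri' * (b2 * (ri * (b1 * x))) = b1 * (ri' * (b2 * (ri * x))) := by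
    refine comm_inv (f := fun y => r * (a2 * (r' * y))) (g := fun y => ri' * (b2 * (ri * y)))
      ?_ ?_ pre5
    · intro x; show r * (a2 * (r' * (ri' * (b2 * (ri * x))))) = x; rw [hr', ha2, hr]
    · intro x; show ri' * (b2 * (ri * (r * (a2 * (r' * x))))) = x; rw [hir, hb2, hir']
  have u5 : ∀ x, b1 * (ri' * (b2 * x)) = ri' * (b2 * (ri * (b1 * (r * x)))) := by
    intro x; rw [comm5, hir]
  have comm7 : ∀ x, ri' * (c2 * (ri * (c1 * x))) = c1 * (ri' * (c2 * (ri * x))) := by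
    refine comm_inv (f := fun y => r * (d2 * (r' * y))) (g := fun y => ri' * (c2 * (ri * y)))
      ?_ ?_ pre1
    · intro x; show r * (d2 * (r' * (ri' * (c2 * (ri * x))))) = x; rw [hr', hd2, hr]
    · intro x; show ri' * (c2 * (ri * (r * (d2 * (r' * x))))) = x; rw [hir, hc2, hir']
  have u7 : ∀ x, c1 * (ri' * (c2 * x)) = ri' * (c2 * (ri * (c1 * (r * x)))) := by
    intro x; rw [comm7, hir]
  have hFFinv : ∀ z, r * (d2 * (r' * (ri' * (c2 * (ri * z))))) = z := by
    intro z; rw [hr', hd2, hr]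
  have u8pre : ∀ y, r * (c2 * (ri * (b1 * y))) = b1 * (ri' * (c2 * (ri * y))) := by
    intro y
    calc r * (c2 * (ri * (b1 * y)))
        = r * (c2 * (ri * (b1 * (r * (d2 * (r' * (ri' * (c2 * (ri * y)))))))))  := by
          rw [hFFinv]
      _ = r * (c2 * (ri * (r * (d2 * (ri * (b1 * (ri' * (c2 * (ri * y))))))))) := by
          rw [← pre2]
      _ = b1 * (ri' * (c2 * (ri * y))) := by rw [hir, hc2, hr]
  have u8 : ∀ x, b1 * (ri' * (c2 * x)) = r * (c2 * (ri * (b1 * (r * x)))) := by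
    intro x; rw [u8pre, hir]
  have u9 : ∀ x, r' * (d1 * (r * (c2 * x))) = c2 * (r' * (d1 * (r * x))) :=
    conj_rule (f := fun y => r' * (d1 * (r * y))) (g := fun y => r' * (d1 * (r * y))) hd2 hc2 hL2
  intro x
  rw [u1, u2, hir', hL2, hr, u4, u5, hr, u6, hr, u7, u8, hr, u9, hr]

private theorem coreC (r ri r' ri' a1 b1 a2 b2 d1 c1 d2 c2 : M)
    (hr : ∀ x, r * (ri * x) = x) (hir : ∀ x, ri * (r * x) = x)
    (hr' : ∀ x, r' * (ri' * x) = x) (hir' : ∀ x, ri' * (r' * x) = x)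
    (ha1 : ∀ x, a1 * (b1 * x) = x) (hb1 : ∀ x, b1 * (a1 * x) = x)
    (ha2 : ∀ x, a2 * (b2 * x) = x) (hb2 : ∀ x, b2 * (a2 * x) = x)
    (hd1 : ∀ x, d1 * (c1 * x) = x) (hc1 : ∀ x, c1 * (d1 * x) = x)
    (hd2 : ∀ x, d2 * (c2 * x) = x) (hc2 : ∀ x, c2 * (d2 * x) = x)
    (hL1 : ∀ x, r' * (a1 * (r * (a2 * x))) = a2 * (r' * (a1 * (r * x))))
    (hL2 : ∀ x, r' * (d1 * (r * (d2 * x))) = d2 * (r' * (d1 * (r * x))))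
    (hL3 : ∀ x, r' * (d1 * (r * (a2 * x))) = a2 * (r' * (d1 * (ri' * x))))
    (hL1' : ∀ x, r * (a2 * (r' * (a1 * x))) = a1 * (r * (a2 * (r' * x))))
    (hL2' : ∀ x, r * (d2 * (r' * (d1 * x))) = d1 * (r * (d2 * (r' * x))))
    (hL3' : ∀ x, r * (d2 * (r' * (a1 * x))) = a1 * (r * (d2 * (ri * x)))) :
    ∀ x, r' * (d1 * (b1 * (c1 * (a1 * (r * (d2 * (b2 * (c2 * (a2 * x)))))))))
      = d2 * (b2 * (c2 * (a2 * (r' * (d1 * (b1 * (c1 * (a1 * (r * x))))))))) := by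
  have g1 := coreA r ri r' ri' a1 b1 a2 b2 d1 c1 d2 c2 hr hir hr' hir' ha1 hb1 ha2 hb2
    hd1 hc1 hd2 hc2 hL1 hL2 hL3 hL1' hL2' hL3'
  have g1' := coreA r' ri' r ri a2 b2 a1 b1 d2 c2 d1 c1 hr' hir' hr hir ha2 hb2 ha1 hb1
    hd2 hc2 hd1 hc1 hL1' hL2' hL3' hL1 hL2 hL3
  have g2 := coreB r ri r' ri' a1 b1 a2 b2 d1 c1 d2 c2 hr hir hr' hir' ha1 hb1 ha2 hb2
    hd1 hc1 hd2 hc2 hL1 hL2 hL3 hL1' hL2' hL3'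
  have step3a : ∀ y, r' * (d1 * (b1 * (c1 * (ri' * (a2 * y)))))
      = a2 * (r' * (d1 * (b1 * (c1 * (ri' * y))))) := by
    intro y; rw [g1' (ri' * y), hr']
  intro x
  rw [g1, g2, hr, ← hir' (a1 * (r * (a2 * x))), hL1, step3a, hir']

end Core


section AuxMap

variable {B C : Type} [Ring B] [Ring C] [Algebra k B] [Algebra k C]

private theorem map_matmul {m : Type} [Fintype m] (f : B →ₐ[k] C) (U V : Matrix m m B) :
    (U * V).map ⇑f = U.map ⇑f * V.map ⇑f :=
  Matrix.map_mul (f := f.toRingHom)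

private theorem map_kronA {N : ℕ} (f : B →ₐ[k] C) (X Y : Matrix (Fin N) (Fin N) B) :
    (X ⊗ₖ Y).map ⇑f = (X.map ⇑f) ⊗ₖ (Y.map ⇑f) := by
  ext ⟨a, b⟩ ⟨c, d⟩
  simp [Matrix.map_apply, Matrix.kroneckerMap_apply, _root_.map_mul]

private theorem map_RAh (f : B →ₐ[k] C) (q : k) (N : ℕ) :
    (RA k B q N).map ⇑f = RA k C q N := by
  ext p s
  simp [RA, Matrix.map_apply, AlgHom.commutes]

private theorem map_RA21h (f : B →ₐ[k] C) (q : k) (N : ℕ) :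
    (RA21 k B q N).map ⇑f = RA21 k C q N := by
  ext p s
  simp [RA21, RA, Matrix.map_apply, AlgHom.commutes]

private theorem map_matone {m : Type} [Fintype m] [DecidableEq m] (f : B →ₐ[k] C) :
    (1 : Matrix m m B).map ⇑f = 1 :=
  Matrix.map_one _ (map_zero f) (map_one f)

end AuxMap

set_option maxHeartbeats 3200000 in
/-- Let `A, D` be N × N matrices over `𝒜` satisfying the defining
relations of the quantized loop edge algebra `𝒟_q(e)`, with `A` and `D` invertible
(with two-sided inverses `Ai`, `Di`).  Then `F := D A⁻¹ D⁻¹` and `G := A` satisfy the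
braided-commutation relation `G₁ R F₂ = R F₂ R⁻¹ G₁ R`, and consequently
`M := F G = D A⁻¹ D⁻¹ A` satisfies the reflection equation
`R₂₁ M₁ R M₂ = M₂ R₂₁ M₁ R`; in particular `l^i_j ↦ (D A⁻¹ D⁻¹ A)^i_j` defines a
homomorphism from the reflection equation algebra on `N²` generators to `𝒜` (the
quantum moment map `μ^e_v` for a loop edge). -/
theorem moment_map_loop (q : k) (hq : q ≠ 0) {N : ℕ}
    (A D Ai Di : Matrix (Fin N) (Fin N) 𝒜)
    (hrel : LoopRel k 𝒜 q A D)
    (hA₁ : A * Ai = 1) (hA₂ : Ai * A = 1)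
    (hD₁ : D * Di = 1) (hD₂ : Di * D = 1) :
    ((A ⊗ₖ (1 : Matrix (Fin N) (Fin N) 𝒜)) * RA k 𝒜 q N
          * ((1 : Matrix (Fin N) (Fin N) 𝒜) ⊗ₖ (D * Ai * Di))
      = RA k 𝒜 q N * ((1 : Matrix (Fin N) (Fin N) 𝒜) ⊗ₖ (D * Ai * Di)) * RAinv k 𝒜 q N
          * (A ⊗ₖ (1 : Matrix (Fin N) (Fin N) 𝒜)) * RA k 𝒜 q N)
    ∧ (RA21 k 𝒜 q N * ((D * Ai * Di * A) ⊗ₖ (1 : Matrix (Fin N) (Fin N) 𝒜)) * RA k 𝒜 q N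
          * ((1 : Matrix (Fin N) (Fin N) 𝒜) ⊗ₖ (D * Ai * Di * A))
      = ((1 : Matrix (Fin N) (Fin N) 𝒜) ⊗ₖ (D * Ai * Di * A)) * RA21 k 𝒜 q N
          * ((D * Ai * Di * A) ⊗ₖ (1 : Matrix (Fin N) (Fin N) 𝒜)) * RA k 𝒜 q N)
    ∧ ∃ φ : REAlgebra k q N →ₐ[k] 𝒜, ∀ i j : Fin N,
        φ (RingQuot.mkAlgHom k (RERel k q N) (FreeAlgebra.ι k (i, j)))
          = (D * Ai * Di * A) i j := by
  obtain ⟨h1, h2, h3⟩ := hrel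
  have hrrm : RA k 𝒜 q N * RAinv k 𝒜 q N = 1 := by
    rw [RA, RAinv, ← Matrix.map_mul, Rmat_mul_RmatInv q hq N,
      Matrix.map_one _ (map_zero _) (map_one _)]
  have hiim : RAinv k 𝒜 q N * RA k 𝒜 q N = 1 := by
    rw [RA, RAinv, ← Matrix.map_mul, RmatInv_mul_Rmat q hq N,
      Matrix.map_one _ (map_zero _) (map_one _)]
  have hrrm' : RA21 k 𝒜 q N * RAinv21 k 𝒜 q N = 1 := by
    have h := map_mul (swEq (k := k) (𝒜 := 𝒜) (N := N)) (RA k 𝒜 q N) (RAinv k 𝒜 q N)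
    rw [hrrm, _root_.map_one, swEq_RA, swEq_RAinv] at h
    exact h.symm
  have hiim' : RAinv21 k 𝒜 q N * RA21 k 𝒜 q N = 1 := by
    have h := map_mul (swEq (k := k) (𝒜 := 𝒜) (N := N)) (RAinv k 𝒜 q N) (RA k 𝒜 q N)
    rw [hiim, _root_.map_one, swEq_RA, swEq_RAinv] at h
    exact h.symm
  have Xr : ∀ x, RA k 𝒜 q N * (RAinv k 𝒜 q N * x) = x := fun x => by
    rw [← mul_assoc, hrrm, one_mul]
  have Xir : ∀ x, RAinv k 𝒜 q N * (RA k 𝒜 q N * x) = x := fun x => by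
    rw [← mul_assoc, hiim, one_mul]
  have Xr' : ∀ x, RA21 k 𝒜 q N * (RAinv21 k 𝒜 q N * x) = x := fun x => by
    rw [← mul_assoc, hrrm', one_mul]
  have Xir' : ∀ x, RAinv21 k 𝒜 q N * (RA21 k 𝒜 q N * x) = x := fun x => by
    rw [← mul_assoc, hiim', one_mul]
  have Xa1 : ∀ x, (A ⊗ₖ (1 : Matrix (Fin N) (Fin N) 𝒜))
      * ((Ai ⊗ₖ (1 : Matrix (Fin N) (Fin N) 𝒜)) * x) = x := fun x => by
    rw [← mul_assoc, kronOne_mul, hA₁, Matrix.one_kronecker_one, one_mul]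
  have Xb1 : ∀ x, (Ai ⊗ₖ (1 : Matrix (Fin N) (Fin N) 𝒜))
      * ((A ⊗ₖ (1 : Matrix (Fin N) (Fin N) 𝒜)) * x) = x := fun x => by
    rw [← mul_assoc, kronOne_mul, hA₂, Matrix.one_kronecker_one, one_mul]
  have Xa2 : ∀ x, ((1 : Matrix (Fin N) (Fin N) 𝒜) ⊗ₖ A)
      * (((1 : Matrix (Fin N) (Fin N) 𝒜) ⊗ₖ Ai) * x) = x := fun x => by
    rw [← mul_assoc, oneKron_mul, hA₁, Matrix.one_kronecker_one, one_mul]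
  have Xb2 : ∀ x, ((1 : Matrix (Fin N) (Fin N) 𝒜) ⊗ₖ Ai)
      * (((1 : Matrix (Fin N) (Fin N) 𝒜) ⊗ₖ A) * x) = x := fun x => by
    rw [← mul_assoc, oneKron_mul, hA₂, Matrix.one_kronecker_one, one_mul]
  have Xd1 : ∀ x, (D ⊗ₖ (1 : Matrix (Fin N) (Fin N) 𝒜))
      * ((Di ⊗ₖ (1 : Matrix (Fin N) (Fin N) 𝒜)) * x) = x := fun x => by
    rw [← mul_assoc, kronOne_mul, hD₁, Matrix.one_kronecker_one, one_mul]
  have Xc1 : ∀ x, (Di ⊗ₖ (1 : Matrix (Fin N) (Fin N) 𝒜))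
      * ((D ⊗ₖ (1 : Matrix (Fin N) (Fin N) 𝒜)) * x) = x := fun x => by
    rw [← mul_assoc, kronOne_mul, hD₂, Matrix.one_kronecker_one, one_mul]
  have Xd2 : ∀ x, ((1 : Matrix (Fin N) (Fin N) 𝒜) ⊗ₖ D)
      * (((1 : Matrix (Fin N) (Fin N) 𝒜) ⊗ₖ Di) * x) = x := fun x => by
    rw [← mul_assoc, oneKron_mul, hD₁, Matrix.one_kronecker_one, one_mul]
  have Xc2 : ∀ x, ((1 : Matrix (Fin N) (Fin N) 𝒜) ⊗ₖ Di)
      * (((1 : Matrix (Fin N) (Fin N) 𝒜) ⊗ₖ D) * x) = x := fun x => by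
    rw [← mul_assoc, oneKron_mul, hD₂, Matrix.one_kronecker_one, one_mul]
  -- relations in iterated form
  have hL1x : ∀ x, RA21 k 𝒜 q N * ((A ⊗ₖ (1 : Matrix (Fin N) (Fin N) 𝒜))
        * (RA k 𝒜 q N * (((1 : Matrix (Fin N) (Fin N) 𝒜) ⊗ₖ A) * x)))
      = ((1 : Matrix (Fin N) (Fin N) 𝒜) ⊗ₖ A) * (RA21 k 𝒜 q N
        * ((A ⊗ₖ (1 : Matrix (Fin N) (Fin N) 𝒜)) * (RA k 𝒜 q N * x))) := fun x => by
    have h := congrArg (· * x) h1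
    simpa [mul_assoc] using h
  have hL2x : ∀ x, RA21 k 𝒜 q N * ((D ⊗ₖ (1 : Matrix (Fin N) (Fin N) 𝒜))
        * (RA k 𝒜 q N * (((1 : Matrix (Fin N) (Fin N) 𝒜) ⊗ₖ D) * x)))
      = ((1 : Matrix (Fin N) (Fin N) 𝒜) ⊗ₖ D) * (RA21 k 𝒜 q N
        * ((D ⊗ₖ (1 : Matrix (Fin N) (Fin N) 𝒜)) * (RA k 𝒜 q N * x))) := fun x => by
    have h := congrArg (· * x) h2
    simpa [mul_assoc] using h
  have hL3x : ∀ x, RA21 k 𝒜 q N * ((D ⊗ₖ (1 : Matrix (Fin N) (Fin N) 𝒜))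
        * (RA k 𝒜 q N * (((1 : Matrix (Fin N) (Fin N) 𝒜) ⊗ₖ A) * x)))
      = ((1 : Matrix (Fin N) (Fin N) 𝒜) ⊗ₖ A) * (RA21 k 𝒜 q N
        * ((D ⊗ₖ (1 : Matrix (Fin N) (Fin N) 𝒜)) * (RAinv21 k 𝒜 q N * x))) := fun x => by
    have h := congrArg (· * x) h3
    simpa [mul_assoc] using h
  -- flipped relations
  have h1s := congrArg (swEq (k := k) (𝒜 := 𝒜) (N := N)) h1
  have h2s := congrArg (swEq (k := k) (𝒜 := 𝒜) (N := N)) h2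
  have h3s := congrArg (swEq (k := k) (𝒜 := 𝒜) (N := N)) h3
  simp only [_root_.map_mul, swEq_RA, swEq_RA21, swEq_RAinv, swEq_RAinv21, swEq_kron_one,
    swEq_one_kron] at h1s h2s h3s
  have hL1'x : ∀ x, RA k 𝒜 q N * (((1 : Matrix (Fin N) (Fin N) 𝒜) ⊗ₖ A)
        * (RA21 k 𝒜 q N * ((A ⊗ₖ (1 : Matrix (Fin N) (Fin N) 𝒜)) * x)))
      = (A ⊗ₖ (1 : Matrix (Fin N) (Fin N) 𝒜)) * (RA k 𝒜 q N
        * (((1 : Matrix (Fin N) (Fin N) 𝒜) ⊗ₖ A) * (RA21 k 𝒜 q N * x))) := fun x => by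
    have h := congrArg (· * x) h1s
    simpa [mul_assoc] using h
  have hL2'x : ∀ x, RA k 𝒜 q N * (((1 : Matrix (Fin N) (Fin N) 𝒜) ⊗ₖ D)
        * (RA21 k 𝒜 q N * ((D ⊗ₖ (1 : Matrix (Fin N) (Fin N) 𝒜)) * x)))
      = (D ⊗ₖ (1 : Matrix (Fin N) (Fin N) 𝒜)) * (RA k 𝒜 q N
        * (((1 : Matrix (Fin N) (Fin N) 𝒜) ⊗ₖ D) * (RA21 k 𝒜 q N * x))) := fun x => by
    have h := congrArg (· * x) h2s
    simpa [mul_assoc] using h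
  have hL3'x : ∀ x, RA k 𝒜 q N * (((1 : Matrix (Fin N) (Fin N) 𝒜) ⊗ₖ D)
        * (RA21 k 𝒜 q N * ((A ⊗ₖ (1 : Matrix (Fin N) (Fin N) 𝒜)) * x)))
      = (A ⊗ₖ (1 : Matrix (Fin N) (Fin N) 𝒜)) * (RA k 𝒜 q N
        * (((1 : Matrix (Fin N) (Fin N) 𝒜) ⊗ₖ D) * (RAinv k 𝒜 q N * x))) := fun x => by
    have h := congrArg (· * x) h3s
    simpa [mul_assoc] using h
  have G1 := coreA (RA k 𝒜 q N) (RAinv k 𝒜 q N) (RA21 k 𝒜 q N) (RAinv21 k 𝒜 q N)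
    (A ⊗ₖ (1 : Matrix (Fin N) (Fin N) 𝒜)) (Ai ⊗ₖ (1 : Matrix (Fin N) (Fin N) 𝒜))
    ((1 : Matrix (Fin N) (Fin N) 𝒜) ⊗ₖ A) ((1 : Matrix (Fin N) (Fin N) 𝒜) ⊗ₖ Ai)
    (D ⊗ₖ (1 : Matrix (Fin N) (Fin N) 𝒜)) (Di ⊗ₖ (1 : Matrix (Fin N) (Fin N) 𝒜))
    ((1 : Matrix (Fin N) (Fin N) 𝒜) ⊗ₖ D) ((1 : Matrix (Fin N) (Fin N) 𝒜) ⊗ₖ Di)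
    Xr Xir Xr' Xir' Xa1 Xb1 Xa2 Xb2 Xd1 Xc1 Xd2 Xc2 hL1x hL2x hL3x hL1'x hL2'x hL3'x
  have G3 := coreC (RA k 𝒜 q N) (RAinv k 𝒜 q N) (RA21 k 𝒜 q N) (RAinv21 k 𝒜 q N)
    (A ⊗ₖ (1 : Matrix (Fin N) (Fin N) 𝒜)) (Ai ⊗ₖ (1 : Matrix (Fin N) (Fin N) 𝒜))
    ((1 : Matrix (Fin N) (Fin N) 𝒜) ⊗ₖ A) ((1 : Matrix (Fin N) (Fin N) 𝒜) ⊗ₖ Ai)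
    (D ⊗ₖ (1 : Matrix (Fin N) (Fin N) 𝒜)) (Di ⊗ₖ (1 : Matrix (Fin N) (Fin N) 𝒜))
    ((1 : Matrix (Fin N) (Fin N) 𝒜) ⊗ₖ D) ((1 : Matrix (Fin N) (Fin N) 𝒜) ⊗ₖ Di)
    Xr Xir Xr' Xir' Xa1 Xb1 Xa2 Xb2 Xd1 Xc1 Xd2 Xc2 hL1x hL2x hL3x hL1'x hL2'x hL3'x
  have part1 : (A ⊗ₖ (1 : Matrix (Fin N) (Fin N) 𝒜)) * RA k 𝒜 q N
        * ((1 : Matrix (Fin N) (Fin N) 𝒜) ⊗ₖ (D * Ai * Di))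
      = RA k 𝒜 q N * ((1 : Matrix (Fin N) (Fin N) 𝒜) ⊗ₖ (D * Ai * Di)) * RAinv k 𝒜 q N
        * (A ⊗ₖ (1 : Matrix (Fin N) (Fin N) 𝒜)) * RA k 𝒜 q N := by
    have kk : (1 : Matrix (Fin N) (Fin N) 𝒜) ⊗ₖ (D * Ai * Di)
        = ((1 : Matrix (Fin N) (Fin N) 𝒜) ⊗ₖ D) * (((1 : Matrix (Fin N) (Fin N) 𝒜) ⊗ₖ Ai)
          * ((1 : Matrix (Fin N) (Fin N) 𝒜) ⊗ₖ Di)) := by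
      simp only [oneKron_mul, mul_assoc]
    have p := G1 1
    rw [mul_one, mul_one] at p
    rw [kk]
    simp only [mul_assoc]
    exact p
  have part2 : RA21 k 𝒜 q N * ((D * Ai * Di * A) ⊗ₖ (1 : Matrix (Fin N) (Fin N) 𝒜))
        * RA k 𝒜 q N * ((1 : Matrix (Fin N) (Fin N) 𝒜) ⊗ₖ (D * Ai * Di * A))
      = ((1 : Matrix (Fin N) (Fin N) 𝒜) ⊗ₖ (D * Ai * Di * A)) * RA21 k 𝒜 q N
        * ((D * Ai * Di * A) ⊗ₖ (1 : Matrix (Fin N) (Fin N) 𝒜)) * RA k 𝒜 q N := by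
    have kk1 : (D * Ai * Di * A) ⊗ₖ (1 : Matrix (Fin N) (Fin N) 𝒜)
        = (D ⊗ₖ (1 : Matrix (Fin N) (Fin N) 𝒜)) * ((Ai ⊗ₖ (1 : Matrix (Fin N) (Fin N) 𝒜))
          * ((Di ⊗ₖ (1 : Matrix (Fin N) (Fin N) 𝒜)) * (A ⊗ₖ (1 : Matrix (Fin N) (Fin N) 𝒜)))) := by
      simp only [kronOne_mul, mul_assoc]
    have kk2 : (1 : Matrix (Fin N) (Fin N) 𝒜) ⊗ₖ (D * Ai * Di * A)
        = ((1 : Matrix (Fin N) (Fin N) 𝒜) ⊗ₖ D) * (((1 : Matrix (Fin N) (Fin N) 𝒜) ⊗ₖ Ai)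
          * (((1 : Matrix (Fin N) (Fin N) 𝒜) ⊗ₖ Di) * ((1 : Matrix (Fin N) (Fin N) 𝒜) ⊗ₖ A))) := by
      simp only [oneKron_mul, mul_assoc]
    have p := G3 1
    rw [mul_one, mul_one] at p
    rw [kk1, kk2]
    simp only [mul_assoc]
    exact p
  refine ⟨part1, part2, ?_⟩
  -- the quantum moment map
  let f : FreeAlgebra k (Fin N × Fin N) →ₐ[k] 𝒜 :=
    FreeAlgebra.lift k (fun p => (D * Ai * Di * A) p.1 p.2)
  have e0 : (REgen k N).map ⇑f = D * Ai * Di * A := by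
    ext i j
    show f (FreeAlgebra.ι k (i, j)) = (D * Ai * Di * A) i j
    exact FreeAlgebra.lift_ι_apply _ _
  have compat : ∀ ⦃x y⦄, RERel k q N x y → f x = f y := by
    rintro x y ⟨p, s, rfl, rfl⟩
    have key : ∀ (W : Matrix (Fin N × Fin N) (Fin N × Fin N) (FreeAlgebra k (Fin N × Fin N))),
        f (W p s) = (W.map ⇑f) p s := fun W => rfl
    rw [key, key]
    simp only [map_matmul, map_kronA, map_RAh, map_RA21h, map_matone, e0]
    rw [part2]
  refine ⟨RingQuot.liftAlgHom k ⟨f, compat⟩, fun i j => ?_⟩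
  exact (RingQuot.liftAlgHom_mkAlgHom_apply (S := k) f compat
    (FreeAlgebra.ι k (i, j))).trans (FreeAlgebra.lift_ι_apply _ _)
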